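/- arXiv:0902.2446 — 6 statements merged into one kernel-verified Lean document; each statement's English description precedes it below -/
import Mathlib

section
/- Fix l > 0 and parameters C1 > 0, C2 > 0, m1, m2 ∈ ℝ. If μ1 = F(0,0), μ2 = F(0,l), μ3 = F(−(√3/2)l, −l/2), μ4 = F((√3/2)l, −l/2), then μ2·μ3·μ4 < μ1³ and the parameters are recovered by: C2 = 3l² / log(μ1³/(μ2·μ3·μ4)), m1 = (C2/(2·l·√3))·log(μ4/μ3), m2 = (C2/(6l))·log(μ2²/(μ3·μ4)), and C1 = μ1·exp((m1² + m2²)/C2). -/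
open Real

/-- The Gaussian field `F(x1,x2) = C1 * exp(-((x1-m1)^2+(x2-m2)^2)/C2)`. -/
noncomputable def gaussF (C1 C2 m1 m2 x1 x2 : ℝ) : ℝ :=
  C1 * Real.exp (-((x1 - m1) ^ 2 + (x2 - m2) ^ 2) / C2)

/-!
Taking logarithms turns the Gaussian into the quadratic
`log F(x) = log C1 - |x - m|² / C2`. The three neighbors `p₂, p₃, p₄` of the origin lie on the
circle of radius `l` and sum to zero, so in the combinations
`3 log μ1 - log μ2 - log μ3 - log μ4`, `log μ4 - log μ3` and `2 log μ2 - log μ3 - log μ4`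
the constant `log C1` cancels and the quadratic terms in `m` cancel, leaving
`3 l² / C2`, `2 √3 l m1 / C2` and `6 l m2 / C2` respectively. Each parameter is then read off.
-/

theorem gaussF_pos {C1 : ℝ} (hC1 : 0 < C1) (C2 m1 m2 x1 x2 : ℝ) :
    0 < gaussF C1 C2 m1 m2 x1 x2 :=
  mul_pos hC1 (exp_pos _)

theorem log_gaussF {C1 : ℝ} (hC1 : 0 < C1) (C2 m1 m2 x1 x2 : ℝ) :
    log (gaussF C1 C2 m1 m2 x1 x2) = log C1 - ((x1 - m1) ^ 2 + (x2 - m2) ^ 2) / C2 := by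
  rw [gaussF, log_mul hC1.ne' (exp_ne_zero _), log_exp]
  ring

theorem gaussF_zero_zero_mul_exp (C1 C2 m1 m2 : ℝ) :
    gaussF C1 C2 m1 m2 0 0 * exp ((m1 ^ 2 + m2 ^ 2) / C2) = C1 := by
  have hexponent : -((0 - m1) ^ 2 + (0 - m2) ^ 2) / C2 + (m1 ^ 2 + m2 ^ 2) / C2 = 0 := by ring
  rw [gaussF, mul_assoc, ← exp_add, hexponent, exp_zero, mul_one]

section Hexagon

variable {C1 : ℝ} (C2 m1 m2 l : ℝ)

local notation "F" => gaussF C1 C2 m1 m2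

theorem log_hexagon_center_cube_div (hC1 : 0 < C1) :
    log (F 0 0 ^ 3 / (F 0 l * F (-(√3 / 2) * l) (-(l / 2)) * F ((√3 / 2) * l) (-(l / 2)))) =
      3 * l ^ 2 / C2 := by
  have hF := gaussF_pos hC1 C2 m1 m2
  rw [log_div (pow_pos (hF _ _) 3).ne' (mul_pos (mul_pos (hF _ _) (hF _ _)) (hF _ _)).ne',
    log_mul (mul_pos (hF _ _) (hF _ _)).ne' (hF _ _).ne', log_mul (hF _ _).ne' (hF _ _).ne',
    log_pow]
  simp only [log_gaussF hC1]
  linear_combination l ^ 2 / (2 * C2) * sq_sqrt (show (0 : ℝ) ≤ 3 by norm_num)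

theorem log_hexagon_east_div_west (hC1 : 0 < C1) :
    log (F ((√3 / 2) * l) (-(l / 2)) / F (-(√3 / 2) * l) (-(l / 2))) =
      2 * √3 * l * m1 / C2 := by
  have hF := gaussF_pos hC1 C2 m1 m2
  rw [log_div (hF _ _).ne' (hF _ _).ne', log_gaussF hC1, log_gaussF hC1]
  ring

theorem log_hexagon_north_sq_div (hC1 : 0 < C1) :
    log (F 0 l ^ 2 / (F (-(√3 / 2) * l) (-(l / 2)) * F ((√3 / 2) * l) (-(l / 2)))) =
      6 * l * m2 / C2 := by
  have hF := gaussF_pos hC1 C2 m1 m2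
  rw [log_div (pow_pos (hF _ _) 2).ne' (mul_pos (hF _ _) (hF _ _)).ne',
    log_mul (hF _ _).ne' (hF _ _).ne', log_pow]
  simp only [log_gaussF hC1]
  linear_combination l ^ 2 / (2 * C2) * sq_sqrt (show (0 : ℝ) ≤ 3 by norm_num)

end Hexagon

/-- From the four exact measurements at a node of a hexagonal tessellation and its three
neighbors, the parameters of the Gaussian are recovered by the formulas of
Proposition 1. -/
theorem hexagon_parameter_recovery
    (l C1 C2 m1 m2 μ1 μ2 μ3 μ4 : ℝ)
    (hl : 0 < l) (hC1 : 0 < C1) (hC2 : 0 < C2)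
    (h1 : μ1 = gaussF C1 C2 m1 m2 0 0)
    (h2 : μ2 = gaussF C1 C2 m1 m2 0 l)
    (h3 : μ3 = gaussF C1 C2 m1 m2 (-(Real.sqrt 3 / 2) * l) (-(l / 2)))
    (h4 : μ4 = gaussF C1 C2 m1 m2 ((Real.sqrt 3 / 2) * l) (-(l / 2))) :
    μ2 * μ3 * μ4 < μ1 ^ 3 ∧
    C2 = 3 * l ^ 2 / Real.log (μ1 ^ 3 / (μ2 * μ3 * μ4)) ∧
    m1 = C2 / (2 * l * Real.sqrt 3) * Real.log (μ4 / μ3) ∧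
    m2 = C2 / (6 * l) * Real.log (μ2 ^ 2 / (μ3 * μ4)) ∧
    C1 = μ1 * Real.exp ((m1 ^ 2 + m2 ^ 2) / C2) := by
  have hcurv := log_hexagon_center_cube_div C2 m1 m2 l hC1
  have heast := log_hexagon_east_div_west C2 m1 m2 l hC1
  have hnorth := log_hexagon_north_sq_div C2 m1 m2 l hC1
  rw [← h1, ← h2, ← h3, ← h4] at hcurv
  rw [← h3, ← h4] at heast
  rw [← h2, ← h3, ← h4] at hnorth
  have hF := gaussF_pos hC1 C2 m1 m2
  have hμ1 : 0 < μ1 := h1 ▸ hF _ _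
  have hμ234 : 0 < μ2 * μ3 * μ4 := h2 ▸ h3 ▸ h4 ▸ mul_pos (mul_pos (hF _ _) (hF _ _)) (hF _ _)
  refine ⟨?_, ?_, ?_, ?_, h1 ▸ (gaussF_zero_zero_mul_exp C1 C2 m1 m2).symm⟩
  · rw [← one_lt_div hμ234, ← log_pos_iff (by positivity), hcurv]
    positivity
  · rw [hcurv]; field_simp
  · rw [heast]; field_simp
  · rw [hnorth]; field_simp
end

section
/- Fix l > 0. The measurement map Φ : ℝ>0 × ℝ>0 × ℝ × ℝ → (ℝ>0)⁴ defined by Φ(C1, C2, m1, m2) = (F(0,0), F(0,l), F(−(√3/2)l, −l/2), F((√3/2)l, −l/2)) is injective: if Φ(C1, C2, m1, m2) = Φ(C1', C2', m1', m2') then (C1, C2, m1, m2) = (C1', C2', m1', m2'). -/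
/-
Dividing by the value at the origin removes the amplitude, and the logarithm of
`F(x) / F(0)` is `(2 ⟪x, m⟫ - |x|²) / C2`, affine in `m`. The three outer points lie on the
circle of radius `l` and sum to zero, so the sum of their three log-ratios is `-3 l² / C2`,
which recovers `C2`; differences of the log-ratios then recover `m1` and `m2`, and the value at
the origin recovers `C1`.
-/

open Real

/-- The measurement map `Φ` at the four points of a hexagonal cell of edge `l`. -/
noncomputable def measMap (l C1 C2 m1 m2 : ℝ) : ℝ × ℝ × ℝ × ℝ :=
  (gaussF C1 C2 m1 m2 0 0,
   gaussF C1 C2 m1 m2 0 l,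
   gaussF C1 C2 m1 m2 (-(Real.sqrt 3 / 2) * l) (-(l / 2)),
   gaussF C1 C2 m1 m2 ((Real.sqrt 3 / 2) * l) (-(l / 2)))

theorem log_gaussF_div_gaussF_zero {C1 : ℝ} (hC1 : C1 ≠ 0) (C2 m1 m2 x1 x2 : ℝ) :
    log (gaussF C1 C2 m1 m2 x1 x2 / gaussF C1 C2 m1 m2 0 0) =
      (2 * (x1 * m1 + x2 * m2) - (x1 ^ 2 + x2 ^ 2)) / C2 := by
  rw [gaussF, gaussF, mul_div_mul_left _ _ hC1, ← exp_sub, log_exp]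
  ring

theorem gaussF_exponent_eq_of_gaussF_eq {C1 C2 m1 m2 C1' C2' m1' m2' x1 x2 : ℝ}
    (hC1 : C1 ≠ 0) (hC1' : C1' ≠ 0)
    (h0 : gaussF C1 C2 m1 m2 0 0 = gaussF C1' C2' m1' m2' 0 0)
    (hx : gaussF C1 C2 m1 m2 x1 x2 = gaussF C1' C2' m1' m2' x1 x2) :
    (2 * (x1 * m1 + x2 * m2) - (x1 ^ 2 + x2 ^ 2)) / C2 =
      (2 * (x1 * m1' + x2 * m2') - (x1 ^ 2 + x2 ^ 2)) / C2' := by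
  rw [← log_gaussF_div_gaussF_zero hC1, ← log_gaussF_div_gaussF_zero hC1', h0, hx]

theorem measMap_injective_general
    (l : ℝ) (hl : 0 < l)
    (C1 C2 m1 m2 C1' C2' m1' m2' : ℝ)
    (hC1 : 0 < C1) (hC2 : 0 < C2) (hC1' : 0 < C1')
    (heq : measMap l C1 C2 m1 m2 = measMap l C1' C2' m1' m2') :
    C1 = C1' ∧ C2 = C2' ∧ m1 = m1' ∧ m2 = m2' := by
  simp only [measMap, Prod.mk.injEq] at heq
  obtain ⟨h0, h1, h2, h3⟩ := heq
  have q1 := gaussF_exponent_eq_of_gaussF_eq hC1.ne' hC1'.ne' h0 h1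
  have q2 := gaussF_exponent_eq_of_gaussF_eq hC1.ne' hC1'.ne' h0 h2
  have q3 := gaussF_exponent_eq_of_gaussF_eq hC1.ne' hC1'.ne' h0 h3
  have hs : sqrt 3 ^ 2 = 3 := sq_sqrt (by norm_num)
  obtain rfl : C2 = C2' := by
    refine inv_inj.mp (mul_left_cancel₀ (by positivity : 3 * l ^ 2 ≠ 0) ?_)
    linear_combination -(q1 + q2 + q3) - l ^ 2 / 2 * (C2⁻¹ - C2'⁻¹) * hs
  obtain rfl : m1 = m1' := by
    refine mul_left_cancel₀ (by positivity : 2 * sqrt 3 * (l / C2) ≠ 0) ?_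
    linear_combination q3 - q2
  obtain rfl : m2 = m2' := by
    refine mul_left_cancel₀ (by positivity : 2 * (l / C2) ≠ 0) ?_
    linear_combination q1
  exact ⟨mul_right_cancel₀ (exp_ne_zero _) h0, rfl, rfl, rfl⟩

/-- The measurement map `Φ` is injective on `ℝ>0 × ℝ>0 × ℝ × ℝ`. -/
theorem measMap_injective
    (l : ℝ) (hl : 0 < l)
    (C1 C2 m1 m2 C1' C2' m1' m2' : ℝ)
    (hC1 : 0 < C1) (hC2 : 0 < C2) (hC1' : 0 < C1') (hC2' : 0 < C2')
    (heq : measMap l C1 C2 m1 m2 = measMap l C1' C2' m1' m2') :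
    C1 = C1' ∧ C2 = C2' ∧ m1 = m1' ∧ m2 = m2' :=
  measMap_injective_general l hl C1 C2 m1 m2 C1' C2' m1' m2' hC1 hC2 hC1' heq
end

section
/- Fix l > 0. For every (μ1, μ2, μ3, μ4) ∈ (ℝ>0)⁴ satisfying μ2·μ3·μ4 < μ1³, there exist (unique) parameters C1 > 0, C2 > 0, m1, m2 ∈ ℝ with Φ(C1, C2, m1, m2) = (μ1, μ2, μ3, μ4); they are given by C2 = 3l²/log(μ1³/(μ2·μ3·μ4)), m1 = (C2/(2·l·√3))·log(μ4/μ3), m2 = (C2/(6l))·log(μ2²/(μ3·μ4)), C1 = μ1·exp((m1² + m2²)/C2). Hence Φ is a bijection from ℝ>0 × ℝ>0 × ℝ × ℝ onto {(μ1,μ2,μ3,μ4) ∈ (ℝ>0)⁴ : μ2·μ3·μ4 < μ1³}. -/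
/-!
Taking logarithms turns `Φ(C1, C2, m) = μ` into the four equations
`log C1 - |pᵢ - m|² / C2 = log μᵢ`. The three outer points lie on the circle of radius `l` and
sum to zero, so combinations of these equations isolate `3 l² / C2`, `m1 / C2`, `m2 / C2` and
`log C1 - |m|² / C2`. The resulting triangular system has exactly one solution, and its `C2` is
positive precisely when `μ2 μ3 μ4 < μ1³`.
-/

open Real

theorem gaussF_eq_exp {C1 C2 m1 m2 x1 x2 : ℝ} (hC1 : 0 < C1) :
    gaussF C1 C2 m1 m2 x1 x2 = exp (log C1 - ((x1 - m1) ^ 2 + (x2 - m2) ^ 2) / C2) := by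
  rw [gaussF, sub_eq_add_neg (log C1), exp_add, exp_log hC1, neg_div]

theorem gaussF_eq_iff_log {C1 C2 m1 m2 x1 x2 μ : ℝ} (hC1 : 0 < C1) (hμ : 0 < μ) :
    gaussF C1 C2 m1 m2 x1 x2 = μ ↔
      log C1 - ((x1 - m1) ^ 2 + (x2 - m2) ^ 2) / C2 = log μ := by
  rw [gaussF_eq_exp hC1, ← exp_log hμ, exp_eq_exp, log_exp]

theorem eq_mul_exp_iff_log {C μ t : ℝ} (hC : 0 < C) (hμ : 0 < μ) :
    C = μ * exp t ↔ log C = log μ + t := by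
  rw [← exp_eq_exp (x := log C), exp_log hC, exp_add, exp_log hμ]

theorem sub_div_eq_iff_mul {K X v C : ℝ} (hC : C ≠ 0) : K - X / C = v ↔ C * K - X = C * v := by
  rw [sub_div' hC, div_eq_iff hC]
  constructor <;> intro h <;> linarith

theorem hexagon_system_iff {l C2 m1 m2 K a b c d : ℝ} (hC2 : C2 ≠ 0) :
    (K - ((0 - m1) ^ 2 + (0 - m2) ^ 2) / C2 = a ∧
      K - ((0 - m1) ^ 2 + (l - m2) ^ 2) / C2 = b ∧
      K - ((-(√3 / 2) * l - m1) ^ 2 + (-(l / 2) - m2) ^ 2) / C2 = c ∧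
      K - ((√3 / 2 * l - m1) ^ 2 + (-(l / 2) - m2) ^ 2) / C2 = d) ↔
    (C2 * (3 * a - b - c - d) = 3 * l ^ 2 ∧
      2 * l * √3 * m1 = C2 * (d - c) ∧
      6 * l * m2 = C2 * (2 * b - c - d) ∧
      C2 * K = C2 * a + (m1 ^ 2 + m2 ^ 2)) := by
  have h3 : √3 ^ 2 = 3 := sq_sqrt (by norm_num)
  simp only [sub_div_eq_iff_mul hC2]
  constructor
  · rintro ⟨e1, e2, e3, e4⟩
    refine ⟨?_, ?_, ?_, ?_⟩
    · linear_combination e2 + e3 + e4 - 3 * e1 + (l ^ 2 / 2) * h3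
    · linear_combination e4 - e3
    · linear_combination 2 * e2 - e3 - e4 - (l ^ 2 / 2) * h3
    · linear_combination e1
  · rintro ⟨hL, hm1, hm2, hK⟩
    refine ⟨?_, ?_, ?_, ?_⟩
    · linear_combination hK
    · linear_combination hK + (1/3) * hm2 + (1/3) * hL
    · linear_combination hK - (1/2) * hm1 - (1/6) * hm2 + (1/3) * hL - (l ^ 2 / 4) * h3
    · linear_combination hK + (1/2) * hm1 - (1/6) * hm2 + (1/3) * hL - (l ^ 2 / 4) * h3

theorem measMap_eq_iff {l C1 C2 m1 m2 μ1 μ2 μ3 μ4 : ℝ} (hl : l ≠ 0) (hC1 : 0 < C1) (hC2 : C2 ≠ 0)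
    (hμ1 : 0 < μ1) (hμ2 : 0 < μ2) (hμ3 : 0 < μ3) (hμ4 : 0 < μ4)
    (hL : log (μ1 ^ 3 / (μ2 * μ3 * μ4)) ≠ 0) :
    measMap l C1 C2 m1 m2 = (μ1, μ2, μ3, μ4) ↔
      C2 = 3 * l ^ 2 / log (μ1 ^ 3 / (μ2 * μ3 * μ4)) ∧
      m1 = C2 / (2 * l * √3) * log (μ4 / μ3) ∧
      m2 = C2 / (6 * l) * log (μ2 ^ 2 / (μ3 * μ4)) ∧
      C1 = μ1 * exp ((m1 ^ 2 + m2 ^ 2) / C2) := by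
  have hlogL : log (μ1 ^ 3 / (μ2 * μ3 * μ4)) = 3 * log μ1 - log μ2 - log μ3 - log μ4 := by
    rw [log_div (by positivity) (by positivity), log_pow, log_mul (by positivity) hμ4.ne',
      log_mul hμ2.ne' hμ3.ne']
    push_cast; ring
  have hlog43 : log (μ4 / μ3) = log μ4 - log μ3 := log_div hμ4.ne' hμ3.ne'
  have hlog234 : log (μ2 ^ 2 / (μ3 * μ4)) = 2 * log μ2 - log μ3 - log μ4 := by
    rw [log_div (by positivity) (by positivity), log_pow, log_mul hμ3.ne' hμ4.ne']
    push_cast; ring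
  simp only [measMap, Prod.mk.injEq, gaussF_eq_iff_log hC1, hμ1, hμ2, hμ3, hμ4]
  refine (hexagon_system_iff hC2).trans (and_congr ?_ (and_congr ?_ (and_congr ?_ ?_)))
  · rw [eq_div_iff hL, hlogL, mul_comm]
  · rw [div_mul_eq_mul_div, eq_div_iff (by positivity), hlog43, mul_comm]
  · rw [div_mul_eq_mul_div, eq_div_iff (by positivity), hlog234, mul_comm]
  · rw [eq_mul_exp_iff_log hC1 hμ1, ← mul_right_inj' hC2 (b := log C1), mul_add,
      mul_div_cancel₀ _ hC2]

/-- For every positive measurement vector with `μ2·μ3·μ4 < μ1³` there exist unique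
parameters realizing it, given by the explicit inversion formulas; hence `Φ` is a
bijection onto `{μ ∈ (ℝ>0)⁴ : μ2·μ3·μ4 < μ1³}`. -/
theorem measMap_surjective_unique
    (l μ1 μ2 μ3 μ4 : ℝ) (hl : 0 < l)
    (hμ1 : 0 < μ1) (hμ2 : 0 < μ2) (hμ3 : 0 < μ3) (hμ4 : 0 < μ4)
    (hlt : μ2 * μ3 * μ4 < μ1 ^ 3) :
    ∀ C2 m1 m2 C1 : ℝ,
      C2 = 3 * l ^ 2 / Real.log (μ1 ^ 3 / (μ2 * μ3 * μ4)) →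
      m1 = C2 / (2 * l * Real.sqrt 3) * Real.log (μ4 / μ3) →
      m2 = C2 / (6 * l) * Real.log (μ2 ^ 2 / (μ3 * μ4)) →
      C1 = μ1 * Real.exp ((m1 ^ 2 + m2 ^ 2) / C2) →
      (0 < C1 ∧ 0 < C2 ∧ measMap l C1 C2 m1 m2 = (μ1, μ2, μ3, μ4)) ∧
      (∀ C1' C2' m1' m2' : ℝ, 0 < C1' → 0 < C2' →
        measMap l C1' C2' m1' m2' = (μ1, μ2, μ3, μ4) →
        C1' = C1 ∧ C2' = C2 ∧ m1' = m1 ∧ m2' = m2) := by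
  intro C2 m1 m2 C1 hC2 hm1 hm2 hC1
  have hL : 0 < log (μ1 ^ 3 / (μ2 * μ3 * μ4)) :=
    log_pos ((one_lt_div (by positivity)).mpr hlt)
  have hC2_pos : 0 < C2 := hC2 ▸ by positivity
  have hC1_pos : 0 < C1 := hC1 ▸ by positivity
  refine ⟨⟨hC1_pos, hC2_pos, ?_⟩, fun C1' C2' m1' m2' hC1' hC2' hmeas => ?_⟩
  · exact (measMap_eq_iff hl.ne' hC1_pos hC2_pos.ne' hμ1 hμ2 hμ3 hμ4 hL.ne').mpr
      ⟨hC2, hm1, hm2, hC1⟩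
  · obtain ⟨rfl, rfl, rfl, rfl⟩ :=
      (measMap_eq_iff hl.ne' hC1' hC2'.ne' hμ1 hμ2 hμ3 hμ4 hL.ne').mp hmeas
    subst hC2 hm1 hm2 hC1
    exact ⟨rfl, rfl, rfl, rfl⟩
end

section
/- Let G be a finite graph on vertex set {1,…,N}, 𝒩ᵢ the set of neighbors of i together with i itself, and let s(0) ∈ (ℝ>0)ᴺ evolve by sᵢ(t+1) = Σ_{j ∈ 𝒩ᵢ} ( (1/sⱼ(t)²)/(Σ_{k ∈ 𝒩ᵢ} 1/sₖ(t)²) )·sⱼ(t). Define Pᵢⱼ(t) = (1/sⱼ(t)) / ( Σ_{k ∈ 𝒩ᵢ} 1/sₖ(t) ) for j ∈ 𝒩ᵢ and Pᵢⱼ(t) = 0 otherwise. Then for every t ∈ ℕ, every i, and every j ∈ 𝒩ᵢ, Pᵢⱼ(t) ≥ (minₖ sₖ(0)) / ( |𝒩ᵢ| · maxₖ sₖ(0) ) > 0; in particular the nonzero entries of all matrices P(t) lie in a compact subset of (0,∞). -/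
/-!
Each update of `s` replaces `sᵢ` by a convex combination of the `sⱼ`, `j ∈ 𝒩ᵢ`, so every `sᵢ(t)`
stays in `[m, M] = [min s(0), max s(0)]`. Then `1/sⱼ(t) ≥ 1/M` while `∑_{k ∈ 𝒩ᵢ} 1/sₖ(t) ≤ |𝒩ᵢ|/m`.
-/

open Finset

theorem sum_div_sum_mul_mem_Icc {ι : Type*} {S : Finset ι} {w x : ι → ℝ} {a b : ℝ}
    (hw : ∀ j ∈ S, 0 ≤ w j) (hW : 0 < ∑ k ∈ S, w k) (hx : ∀ j ∈ S, x j ∈ Set.Icc a b) :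
    ∑ j ∈ S, (w j / ∑ k ∈ S, w k) * x j ∈ Set.Icc a b :=
  (convex_Icc a b).sum_mem (fun j hj => div_nonneg (hw j hj) hW.le)
    (by rw [← Finset.sum_div, div_self hW.ne']) hx

theorem neighborhood_average_mem_Icc {ι : Type*} (𝒩 : ι → Finset ι) (h𝒩 : ∀ i, (𝒩 i).Nonempty)
    (w : ℝ → ℝ) (hw : ∀ x, 0 < x → 0 < w x) (s : ℕ → ι → ℝ) {a b : ℝ} (ha : 0 < a)
    (hs0 : ∀ i, s 0 i ∈ Set.Icc a b)
    (hrec : ∀ t i, s (t + 1) i = ∑ j ∈ 𝒩 i, (w (s t j) / ∑ k ∈ 𝒩 i, w (s t k)) * s t j) :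
    ∀ t i, s t i ∈ Set.Icc a b := by
  intro t
  induction t with
  | zero => exact hs0
  | succ t ih =>
    have hw_pos : ∀ j, 0 < w (s t j) := fun j => hw _ (ha.trans_le (ih j).1)
    intro i
    rw [hrec]
    exact sum_div_sum_mul_mem_Icc (fun j _ => (hw_pos j).le)
      (Finset.sum_pos (fun j _ => hw_pos j) (h𝒩 i)) (fun j _ => ih j)

theorem div_card_mul_le_inv_div_sum_inv {ι : Type*} {S : Finset ι} {x : ι → ℝ} {m M : ℝ}
    (hm : 0 < m) (hx : ∀ k ∈ S, x k ∈ Set.Icc m M) {j : ι} (hj : j ∈ S) :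
    0 < m / (#S * M) ∧ m / (#S * M) ≤ (x j)⁻¹ / ∑ k ∈ S, (x k)⁻¹ := by
  have hx_pos : ∀ k ∈ S, 0 < x k := fun k hk => hm.trans_le (hx k hk).1
  have hM : 0 < M := (hx_pos j hj).trans_le (hx j hj).2
  have hcard : (0 : ℝ) < #S := by exact_mod_cast Finset.card_pos.mpr ⟨j, hj⟩
  have hsum_pos : 0 < ∑ k ∈ S, (x k)⁻¹ :=
    Finset.sum_pos (fun k hk => inv_pos.mpr (hx_pos k hk)) ⟨j, hj⟩
  have hsum_le : ∑ k ∈ S, (x k)⁻¹ ≤ #S * m⁻¹ := by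
    simpa using Finset.sum_le_sum fun k hk => inv_anti₀ hm (hx k hk).1
  refine ⟨by positivity, ?_⟩
  calc m / (#S * M) = M⁻¹ / (#S * m⁻¹) := by field_simp
    _ ≤ (x j)⁻¹ / ∑ k ∈ S, (x k)⁻¹ :=
      div_le_div₀ (inv_pos.mpr (hx_pos j hj)).le (inv_anti₀ (hx_pos j hj) (hx j hj).2)
        hsum_pos hsum_le

/-- The nonzero entries of the state-dependent matrices `P(t)` of the fusion
algorithm are uniformly bounded below by
`(min s(0)) / (|𝒩ᵢ| · max s(0)) > 0`; in particular they lie in a compact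
subset of `(0,∞)`. -/
theorem fusion_matrix_entries_bounded_below
    (N : ℕ) (hN : 0 < N) (G : SimpleGraph (Fin N)) [DecidableRel G.Adj]
    (s : ℕ → Fin N → ℝ) (hs0 : ∀ i, 0 < s 0 i)
    (hrec : ∀ t i, s (t + 1) i =
      ∑ j ∈ insert i (G.neighborFinset i),
        (((s t j) ^ 2)⁻¹ / ∑ k ∈ insert i (G.neighborFinset i), ((s t k) ^ 2)⁻¹)
          * s t j) :
    ∀ (t : ℕ) (i : Fin N), ∀ j ∈ insert i (G.neighborFinset i),
      0 < (Finset.univ.inf'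
            (Finset.univ_nonempty_iff.mpr (Fin.pos_iff_nonempty.mp hN)) (s 0)) /
          ((insert i (G.neighborFinset i)).card *
            Finset.univ.sup'
              (Finset.univ_nonempty_iff.mpr (Fin.pos_iff_nonempty.mp hN)) (s 0)) ∧
      (Finset.univ.inf'
          (Finset.univ_nonempty_iff.mpr (Fin.pos_iff_nonempty.mp hN)) (s 0)) /
        ((insert i (G.neighborFinset i)).card *
          Finset.univ.sup'
            (Finset.univ_nonempty_iff.mpr (Fin.pos_iff_nonempty.mp hN)) (s 0)) ≤
        (s t j)⁻¹ / ∑ k ∈ insert i (G.neighborFinset i), (s t k)⁻¹ := by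
  intro t i j hj
  have hne : (univ : Finset (Fin N)).Nonempty := univ_nonempty_iff.mpr (Fin.pos_iff_nonempty.mp hN)
  have hmin_pos : 0 < univ.inf' hne (s 0) := (Finset.lt_inf'_iff _).mpr fun k _ => hs0 k
  have hbounds := neighborhood_average_mem_Icc (fun i => insert i (G.neighborFinset i))
    (fun i => Finset.insert_nonempty _ _) (fun x => (x ^ 2)⁻¹) (fun x hx => by positivity) s
    (b := univ.sup' hne (s 0)) hmin_pos
    (fun k => ⟨Finset.inf'_le _ (mem_univ k), Finset.le_sup' _ (mem_univ k)⟩) hrec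
  exact div_card_mul_le_inv_div_sum_inv hmin_pos (fun k _ => hbounds t k) hj
end

section
/- Let G be a finite connected graph on vertex set {1,…,N}, and 𝒩ᵢ the set of neighbors of i in G together with i itself. Let x(0) ∈ ℝᴺ and s(0) ∈ (ℝ>0)ᴺ, and define recursively xᵢ(t+1) = Σ_{j ∈ 𝒩ᵢ} Pᵢⱼ(t)·xⱼ(t) and sᵢ(t+1) = Σ_{j ∈ 𝒩ᵢ} Mᵢⱼ(t)·sⱼ(t), where Pᵢⱼ(t) = (1/sⱼ(t))/( Σ_{k ∈ 𝒩ᵢ} 1/sₖ(t) ) and Mᵢⱼ(t) = (1/sⱼ(t)²)/( Σ_{k ∈ 𝒩ᵢ} 1/sₖ(t)² ) for j ∈ 𝒩ᵢ, and both are 0 otherwise. Then the system converges to consensus: there exist scalars x*, s* ∈ ℝ such that for every j ∈ {1,…,N}, xⱼ(t) → x* and sⱼ(t) → s* as t → ∞. -/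
/-!
Consider an iteration that replaces every value `y_i` by an average over the closed
neighbourhood of `i` with all weights at least `η > 0`. Its minimum never decreases and its
maximum never increases. Over `|V|` steps the spread `max - min` shrinks by the factor
`1 - η ^ |V|`: the excess of the values over the current minimum keeps at least a fraction `η`
of itself per step while it travels along a path from a maximizing vertex, and every path has
fewer than `|V|` edges. Hence the minimum and the maximum converge to a common limit.

Both fusion iterations are of this form. The variance iteration averages the `s_j`
themselves, so the `s_j(t)` stay in the interval `[a, b] ⊆ (0, ∞)` spanned by the initial
variances; the inverse (squared) variances are then pinned between fixed positive bounds,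
and the normalized weights are at least `η = a / (|V| b)` (resp. `a² / (|V| b²)`).
-/

open Finset Filter Topology

theorem Antitone.tendsto_zero_of_add_le_mul {g : ℕ → ℝ} {r : ℝ} {K : ℕ} (hg : Antitone g)
    (h0 : ∀ t, 0 ≤ g t) (hr : r < 1) (hK : ∀ t, g (t + K) ≤ r * g t) :
    Tendsto g atTop (𝓝 0) := by
  have hlim := tendsto_atTop_ciInf hg ⟨0, by rintro _ ⟨t, rfl⟩; exact h0 t⟩
  have hL₀ : 0 ≤ ⨅ t, g t := le_ciInf h0
  have hLr : ⨅ t, g t ≤ r * ⨅ t, g t :=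
    le_of_tendsto_of_tendsto' ((tendsto_add_atTop_iff_nat K).2 hlim) (hlim.const_mul r) hK
  rwa [show ⨅ t, g t = 0 by nlinarith] at hlim

theorem exists_tendsto_of_monotone_of_antitone {ι : Type*} [Nonempty ι] {y : ℕ → ι → ℝ}
    {m M : ℕ → ℝ} (hm : Monotone m) (hM : Antitone M) (hgap : Tendsto (M - m) atTop (𝓝 0))
    (hmy : ∀ t k, m t ≤ y t k) (hyM : ∀ t k, y t k ≤ M t) :
    ∃ c, ∀ k, Tendsto (fun t => y t k) atTop (𝓝 c) := by
  obtain ⟨k₀⟩ := ‹Nonempty ι›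
  have hbdd : BddAbove (Set.range m) := by
    refine ⟨M 0, ?_⟩
    rintro _ ⟨t, rfl⟩
    exact (hmy t k₀).trans ((hyM t k₀).trans (hM (Nat.zero_le t)))
  have hmlim := tendsto_atTop_ciSup hm hbdd
  have hMlim : Tendsto M atTop (𝓝 (⨆ t, m t)) := by
    simpa using hmlim.add hgap
  exact ⟨_, fun k =>
    tendsto_of_tendsto_of_tendsto_of_le_of_le hmlim hMlim (hmy · k) (hyM · k)⟩

theorem inv_mem_Icc_inv {a b x : ℝ} (ha : 0 < a) (hx : x ∈ Set.Icc a b) :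
    x⁻¹ ∈ Set.Icc b⁻¹ a⁻¹ :=
  ⟨inv_anti₀ (ha.trans_le hx.1) hx.2, inv_anti₀ ha hx.1⟩

section Consensus

variable {V : Type*} [Fintype V] [DecidableEq V]

def SimpleGraph.closedNeighborFinset (G : SimpleGraph V) [DecidableRel G.Adj] (i : V) :
    Finset V :=
  insert i (G.neighborFinset i)

structure IsUniformNeighborAveraging (G : SimpleGraph V) [DecidableRel G.Adj] (η : ℝ)
    (w : ℕ → V → V → ℝ) : Prop where
  pos : 0 < η
  sum_eq_one : ∀ t i, ∑ j ∈ G.closedNeighborFinset i, w t i j = 1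
  le_weight : ∀ t i j, j ∈ G.closedNeighborFinset i → η ≤ w t i j

namespace IsUniformNeighborAveraging

variable {G : SimpleGraph V} [DecidableRel G.Adj] {η : ℝ} {w : ℕ → V → V → ℝ}
  {y : ℕ → V → ℝ}

theorem weight_nonneg (hw : IsUniformNeighborAveraging G η w) {t : ℕ} {i j : V}
    (hj : j ∈ G.closedNeighborFinset i) : 0 ≤ w t i j :=
  hw.pos.le.trans (hw.le_weight t i j hj)

theorem forall_mem_of_convex (hw : IsUniformNeighborAveraging G η w)
    (hy : ∀ t i, y (t + 1) i = ∑ j ∈ G.closedNeighborFinset i, w t i j * y t j)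
    {K : Set ℝ} (hK : Convex ℝ K) {t : ℕ} (h : ∀ k, y t k ∈ K) :
    ∀ n i, y (t + n) i ∈ K
  | 0 => h
  | n + 1 => fun i => by
    rw [← add_assoc, hy]
    exact hK.sum_mem (fun j hj => hw.weight_nonneg hj) (hw.sum_eq_one _ i)
      fun j _ => forall_mem_of_convex hw hy hK h n j

theorem mul_sub_le_sub_succ (hw : IsUniformNeighborAveraging G η w)
    (hy : ∀ t i, y (t + 1) i = ∑ j ∈ G.closedNeighborFinset i, w t i j * y t j)
    {t : ℕ} {c : ℝ} (hc : ∀ k, c ≤ y t k) {i j : V} (hj : j ∈ G.closedNeighborFinset i) :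
    η * (y t j - c) ≤ y (t + 1) i - c := by
  have hsub : y (t + 1) i - c = ∑ k ∈ G.closedNeighborFinset i, w t i k * (y t k - c) := by
    simp only [mul_sub, sum_sub_distrib, ← sum_mul, hw.sum_eq_one, one_mul, hy]
  calc η * (y t j - c) ≤ w t i j * (y t j - c) :=
        mul_le_mul_of_nonneg_right (hw.le_weight t i j hj) (sub_nonneg.2 (hc j))
    _ ≤ ∑ k ∈ G.closedNeighborFinset i, w t i k * (y t k - c) :=
        single_le_sum (f := fun k => w t i k * (y t k - c))
          (fun k hk => mul_nonneg (hw.weight_nonneg hk) (sub_nonneg.2 (hc k))) hj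
    _ = y (t + 1) i - c := hsub.symm

theorem pow_mul_sub_le_of_walk (hw : IsUniformNeighborAveraging G η w)
    (hy : ∀ t i, y (t + 1) i = ∑ j ∈ G.closedNeighborFinset i, w t i j * y t j)
    {t : ℕ} {c : ℝ} (hc : ∀ k, c ≤ y t k) {i : V} :
    ∀ (n : ℕ) {j : V} (p : G.Walk j i), p.length ≤ n →
      η ^ n * (y t i - c) ≤ y (t + n) j - c
  | 0, _, p, hp => by
    obtain rfl := SimpleGraph.Walk.eq_of_length_eq_zero (Nat.le_zero.1 hp)
    simp
  | n + 1, j, p, hp => by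
    obtain ⟨v, hv, q, hq⟩ :
        ∃ v ∈ G.closedNeighborFinset j, ∃ q : G.Walk v i, q.length ≤ n := by
      cases p with
      | nil => exact ⟨_, mem_insert_self _ _, .nil, by simp⟩
      | cons hadj q =>
        exact ⟨_, mem_insert_of_mem (G.mem_neighborFinset _ _ |>.2 hadj), q, by simpa using hp⟩
    have hc' := hw.forall_mem_of_convex hy (convex_Ici c) hc n
    calc η ^ (n + 1) * (y t i - c) = η * (η ^ n * (y t i - c)) := by ring
      _ ≤ η * (y (t + n) v - c) :=
        mul_le_mul_of_nonneg_left (pow_mul_sub_le_of_walk hw hy hc n q hq) hw.pos.le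
      _ ≤ y (t + (n + 1)) j - c := hw.mul_sub_le_sub_succ hy hc' hv

theorem iSup_sub_iInf_le (hconn : G.Connected) (hw : IsUniformNeighborAveraging G η w)
    (hy : ∀ t i, y (t + 1) i = ∑ j ∈ G.closedNeighborFinset i, w t i j * y t j) (t : ℕ) :
    (⨆ k, y (t + Fintype.card V) k) - ⨅ k, y (t + Fintype.card V) k ≤
      (1 - η ^ Fintype.card V) * ((⨆ k, y t k) - ⨅ k, y t k) := by
  have := hconn.nonempty
  set n := Fintype.card V
  set m := ⨅ k, y t k
  set M := ⨆ k, y t k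
  obtain ⟨i, hi⟩ := exists_eq_ciSup_of_finite (f := y t)
  have hm : ∀ k, m ≤ y t k := ciInf_le (Finite.bddBelow_range _)
  have hlow : ∀ j, m + η ^ n * (M - m) ≤ y (t + n) j := fun j => by
    let p := (hconn j i).some.bypass
    have := hw.pow_mul_sub_le_of_walk hy hm n p (SimpleGraph.Walk.bypass_isPath _).length_lt.le
    rw [hi] at this
    linarith
  have hup : ∀ j, y (t + n) j ≤ M :=
    hw.forall_mem_of_convex hy (convex_Iic M) (le_ciSup (Finite.bddAbove_range (y t))) n
  have h₁ : m + η ^ n * (M - m) ≤ ⨅ j, y (t + n) j := le_ciInf hlow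
  have h₂ : ⨆ j, y (t + n) j ≤ M := ciSup_le hup
  linarith

theorem exists_tendsto (hconn : G.Connected) (hw : IsUniformNeighborAveraging G η w)
    (hy : ∀ t i, y (t + 1) i = ∑ j ∈ G.closedNeighborFinset i, w t i j * y t j) :
    ∃ c, ∀ k, Tendsto (fun t => y t k) atTop (𝓝 c) := by
  have := hconn.nonempty
  have hmy : ∀ t k, ⨅ j, y t j ≤ y t k := fun t => ciInf_le (Finite.bddBelow_range _)
  have hyM : ∀ t k, y t k ≤ ⨆ j, y t j := fun t => le_ciSup (Finite.bddAbove_range _)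
  have hm : Monotone fun t => ⨅ j, y t j := monotone_nat_of_le_succ fun t =>
    le_ciInf (hw.forall_mem_of_convex hy (convex_Ici _) (hmy t) 1)
  have hM : Antitone fun t => ⨆ j, y t j := antitone_nat_of_succ_le fun t =>
    ciSup_le (hw.forall_mem_of_convex hy (convex_Iic _) (hyM t) 1)
  refine exists_tendsto_of_monotone_of_antitone hm hM ?_ hmy hyM
  let k₀ := Classical.arbitrary V
  exact Antitone.tendsto_zero_of_add_le_mul (fun a b hab => sub_le_sub (hM hab) (hm hab))
    (fun t => sub_nonneg.2 ((hmy t k₀).trans (hyM t k₀)))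
    (by linarith [pow_pos hw.pos (Fintype.card V)]) (hw.iSup_sub_iInf_le hconn hy)

end IsUniformNeighborAveraging

theorem div_le_div_sum_of_mem_Icc {ι : Type*} [Fintype ι] {S : Finset ι} {v : ι → ℝ}
    {a b : ℝ} (ha : 0 < a) (hv : ∀ k ∈ S, v k ∈ Set.Icc a b) {j : ι} (hj : j ∈ S) :
    a / (Fintype.card ι * b) ≤ v j / ∑ k ∈ S, v k := by
  have hb : 0 ≤ b := ha.le.trans ((hv j hj).1.trans (hv j hj).2)
  have hsum : ∑ k ∈ S, v k ≤ Fintype.card ι * b :=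
    calc ∑ k ∈ S, v k ≤ #S • b := sum_le_card_nsmul _ _ _ fun k hk => (hv k hk).2
      _ = #S * b := nsmul_eq_mul _ _
      _ ≤ Fintype.card ι * b := by gcongr; exact card_le_univ S
  exact div_le_div₀ (ha.trans_le (hv j hj).1).le (hv j hj).1
    (sum_pos (fun k hk => ha.trans_le (hv k hk).1) ⟨j, hj⟩) hsum

theorem isUniformNeighborAveraging_div_sum [Nonempty V] {G : SimpleGraph V}
    [DecidableRel G.Adj] {v : ℕ → V → ℝ} {a b : ℝ} (ha : 0 < a)
    (hv : ∀ t k, v t k ∈ Set.Icc a b) :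
    IsUniformNeighborAveraging G (a / (Fintype.card V * b))
      (fun t i j => v t j / ∑ k ∈ G.closedNeighborFinset i, v t k) where
  pos := by
    have hb : 0 < b := ha.trans_le ((hv 0 (Classical.arbitrary V)).1.trans (hv 0 _).2)
    positivity
  sum_eq_one t i := by
    rw [← sum_div, div_self]
    exact (sum_pos (fun k _ => ha.trans_le (hv t k).1) ⟨i, mem_insert_self _ _⟩).ne'
  le_weight t i _ hj := div_le_div_sum_of_mem_Icc ha (fun k _ => hv t k) hj

theorem mem_Icc_of_inv_sq_weighted_average {G : SimpleGraph V} [DecidableRel G.Adj]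
    {s : ℕ → V → ℝ} {a b : ℝ} (ha : 0 < a) (hs0 : ∀ i, s 0 i ∈ Set.Icc a b)
    (hsrec : ∀ t i, s (t + 1) i = ∑ j ∈ G.closedNeighborFinset i,
      ((s t j ^ 2)⁻¹ / ∑ k ∈ G.closedNeighborFinset i, (s t k ^ 2)⁻¹) * s t j) :
    ∀ t i, s t i ∈ Set.Icc a b
  | 0 => hs0
  | t + 1 => fun i => by
    have ih := mem_Icc_of_inv_sq_weighted_average ha hs0 hsrec t
    have hsum : 0 < ∑ k ∈ G.closedNeighborFinset i, (s t k ^ 2)⁻¹ :=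
      sum_pos (fun k _ => by have := ha.trans_le (ih k).1; positivity) ⟨i, mem_insert_self _ _⟩
    rw [hsrec]
    refine (convex_Icc (𝕜 := ℝ) a b).sum_mem (fun j _ => ?_) ?_ fun j _ => ih j
    · exact div_nonneg (inv_nonneg.2 (sq_nonneg _)) hsum.le
    · rw [← sum_div, div_self hsum.ne']

end Consensus

theorem fusion_algorithm_converges_general
    (N : ℕ) (G : SimpleGraph (Fin N)) [DecidableRel G.Adj]
    (hconn : G.Connected)
    (x s : ℕ → Fin N → ℝ) (hs0 : ∀ i, 0 < s 0 i)
    (hxrec : ∀ t i, x (t + 1) i =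
      ∑ j ∈ insert i (G.neighborFinset i),
        ((s t j)⁻¹ / ∑ k ∈ insert i (G.neighborFinset i), (s t k)⁻¹) * x t j)
    (hsrec : ∀ t i, s (t + 1) i =
      ∑ j ∈ insert i (G.neighborFinset i),
        (((s t j) ^ 2)⁻¹ / ∑ k ∈ insert i (G.neighborFinset i), ((s t k) ^ 2)⁻¹)
          * s t j) :
    ∃ xstar sstar : ℝ, ∀ j : Fin N,
      Tendsto (fun t => x t j) atTop (nhds xstar) ∧
      Tendsto (fun t => s t j) atTop (nhds sstar) := by
  have := hconn.nonempty
  obtain ⟨a, b, ha, hab⟩ : ∃ a b, 0 < a ∧ ∀ i, s 0 i ∈ Set.Icc a b := by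
    obtain ⟨i, -, hi⟩ := exists_mem_eq_inf' univ_nonempty (s 0)
    exact ⟨_, univ.sup' univ_nonempty (s 0), hi ▸ hs0 i,
      fun k => ⟨inf'_le _ (mem_univ k), le_sup' _ (mem_univ k)⟩⟩
  have hs := mem_Icc_of_inv_sq_weighted_average ha hab hsrec
  have hb : 0 < b := ha.trans_le ((hab (Classical.arbitrary _)).1.trans (hab _).2)
  obtain ⟨xstar, hxlim⟩ := (isUniformNeighborAveraging_div_sum (v := fun t k => (s t k)⁻¹)
    (inv_pos.2 hb) fun t k => inv_mem_Icc_inv ha (hs t k)).exists_tendsto hconn hxrec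
  obtain ⟨sstar, hslim⟩ := (isUniformNeighborAveraging_div_sum (v := fun t k => (s t k ^ 2)⁻¹)
    (by positivity) fun t k => inv_mem_Icc_inv (by positivity)
      ⟨pow_le_pow_left₀ ha.le (hs t k).1 2,
        pow_le_pow_left₀ (ha.trans_le (hs t k).1).le (hs t k).2 2⟩).exists_tendsto hconn hsrec
  exact ⟨xstar, sstar, fun j => ⟨hxlim j, hslim j⟩⟩

/-- Convergence of the proposed fusion algorithm: on a connected graph, the coupled
inverse-variance-weighted consensus iterations on the estimates `x(t)` and the
presumed variances `s(t)` converge to a consensus. -/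
theorem fusion_algorithm_converges
    (N : ℕ) (hN : 0 < N) (G : SimpleGraph (Fin N)) [DecidableRel G.Adj]
    (hconn : G.Connected)
    (x s : ℕ → Fin N → ℝ) (hs0 : ∀ i, 0 < s 0 i)
    (hxrec : ∀ t i, x (t + 1) i =
      ∑ j ∈ insert i (G.neighborFinset i),
        ((s t j)⁻¹ / ∑ k ∈ insert i (G.neighborFinset i), (s t k)⁻¹) * x t j)
    (hsrec : ∀ t i, s (t + 1) i =
      ∑ j ∈ insert i (G.neighborFinset i),
        (((s t j) ^ 2)⁻¹ / ∑ k ∈ insert i (G.neighborFinset i), ((s t k) ^ 2)⁻¹)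
          * s t j) :
    ∃ xstar sstar : ℝ, ∀ j : Fin N,
      Tendsto (fun t => x t j) atTop (nhds xstar) ∧
      Tendsto (fun t => s t j) atTop (nhds sstar) :=
  fusion_algorithm_converges_general N G hconn x s hs0 hxrec hsrec
end

section
/- Let N ≥ 1 and let P ∈ ℝ^{N×N} be a doubly stochastic matrix with all entries strictly positive. Let σ1, …, σN > 0 and x1, …, xN ∈ ℝ, and define a(0), b(0) ∈ ℝᴺ by aₖ(0) = xₖ/σₖ² and bₖ(0) = 1/σₖ², with a(t+1) = P·a(t) and b(t+1) = P·b(t). Then for every j ∈ {1,…,N}, the limit lim_{t→∞} aⱼ(t)/bⱼ(t) exists and equals x̂ = ( Σₗ xₗ/σₗ² ) / ( Σₗ 1/σₗ² ). -/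
/-!
The spread `max v - min v` of a vector shrinks by the factor `1 - ε` under a row-stochastic
matrix whose entries are all at least `ε > 0`, because every entry of `P *ᵥ v` puts weight at
least `ε` on the minimum of `v`. Column sums one make the total `∑ᵢ vᵢ` invariant, and the
average always lies between the minimum and the maximum, so every node converges to the initial
average. Running this on both the weighted values and the weights, the factor `1 / N` cancels
in the ratio of the two limits.
-/

open Finset Filter Matrix Topology

section

variable {ι : Type*} [Fintype ι]

lemma sum_mul_le_sub_mul {w v : ι → ℝ} {M ε : ℝ} (hw : ∀ k, 0 ≤ w k) (hw1 : ∑ k, w k = 1)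
    (hv : ∀ k, v k ≤ M) {k₀ : ι} (hε : ε ≤ w k₀) :
    ∑ k, w k * v k ≤ M - ε * (M - v k₀) := by
  have hsingle : w k₀ * (M - v k₀) ≤ ∑ k, w k * (M - v k) :=
    single_le_sum (fun k _ => mul_nonneg (hw k) (sub_nonneg.2 (hv k))) (mem_univ k₀)
  have hsum : ∑ k, w k * (M - v k) = M - ∑ k, w k * v k := by
    simp only [mul_sub, sum_sub_distrib, ← sum_mul, hw1, one_mul]
  nlinarith [mul_le_mul_of_nonneg_right hε (sub_nonneg.2 (hv k₀))]

namespace Matrix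

variable [Nonempty ι]

noncomputable def spread (v : ι → ℝ) : ℝ :=
  univ.sup' univ_nonempty v - univ.inf' univ_nonempty v

lemma abs_sub_average_le_spread (v : ι → ℝ) (j : ι) :
    |v j - (∑ i, v i) / Fintype.card ι| ≤ spread v := by
  have hcard : (0 : ℝ) < Fintype.card ι := by exact_mod_cast Fintype.card_pos
  have hle : (∑ i, v i) / Fintype.card ι ≤ univ.sup' univ_nonempty v := by
    rw [div_le_iff₀ hcard, mul_comm, ← nsmul_eq_mul]
    exact sum_le_card_nsmul _ _ _ fun i _ => le_sup' v (mem_univ i)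
  have hge : univ.inf' univ_nonempty v ≤ (∑ i, v i) / Fintype.card ι := by
    rw [le_div_iff₀ hcard, mul_comm, ← nsmul_eq_mul]
    exact card_nsmul_le_sum _ _ _ fun i _ => inf'_le v (mem_univ i)
  have := le_sup' v (mem_univ j)
  have := inf'_le v (mem_univ j)
  rw [abs_le, spread]
  constructor <;> linarith

variable [DecidableEq ι]

lemma spread_mulVec_le {P : Matrix ι ι ℝ} (hP : P ∈ rowStochastic ℝ ι) {ε : ℝ}
    (hε : ∀ i j, ε ≤ P i j) (v : ι → ℝ) :
    spread (P *ᵥ v) ≤ (1 - ε) * spread v := by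
  obtain ⟨k₀, -, hk₀⟩ := exists_mem_eq_inf' univ_nonempty v
  set M := univ.sup' univ_nonempty v
  set m := univ.inf' univ_nonempty v
  have hupper : univ.sup' univ_nonempty (P *ᵥ v) ≤ M - ε * (M - m) :=
    sup'_le _ _ fun i _ => by
      rw [hk₀]
      exact sum_mul_le_sub_mul (fun k => nonneg_of_mem_rowStochastic hP)
        (sum_row_of_mem_rowStochastic hP i) (fun k => le_sup' v (mem_univ k)) (hε i k₀)
  have hlower : m ≤ univ.inf' univ_nonempty (P *ᵥ v) :=
    le_inf' _ _ fun i _ => calc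
      m = ∑ k, P i k * m := by rw [← sum_mul, sum_row_of_mem_rowStochastic hP i, one_mul]
      _ ≤ ∑ k, P i k * v k := sum_le_sum fun k _ =>
        mul_le_mul_of_nonneg_left (inf'_le v (mem_univ k)) (nonneg_of_mem_rowStochastic hP)
  rw [spread, spread]
  linarith

theorem tendsto_average_of_doublyStochastic_of_pos {P : Matrix ι ι ℝ}
    (hP : P ∈ doublyStochastic ℝ ι) (hpos : ∀ i j, 0 < P i j) (v : ℕ → ι → ℝ)
    (hv : ∀ t, v (t + 1) = P *ᵥ v t) (j : ι) :
    Tendsto (fun t => v t j) atTop (𝓝 ((∑ i, v 0 i) / Fintype.card ι)) := by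
  have hrow := (mem_doublyStochastic_iff_mem_rowStochastic_and_mem_colStochastic.1 hP).1
  obtain ⟨p, hp⟩ := Finite.exists_min fun p : ι × ι => P p.1 p.2
  set ε := P p.1 p.2
  have hrate : 0 ≤ 1 - ε := sub_nonneg.2 (le_one_of_mem_doublyStochastic hP)
  have hspread (t : ℕ) : spread (v t) ≤ (1 - ε) ^ t * spread (v 0) :=
    le_geom (u := fun t => spread (v t)) hrate t
      fun k _ => hv k ▸ spread_mulVec_le hrow (fun i j => hp (i, j)) (v k)
  have hsum (t : ℕ) : ∑ i, v t i = ∑ i, v 0 i := by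
    induction t with
    | zero => rfl
    | succ t ih => rw [hv t, sum_mulVec_of_mem_doublyStochastic hP, ih]
  rw [← tendsto_sub_nhds_zero_iff]
  refine squeeze_zero_norm (a := fun t => (1 - ε) ^ t * spread (v 0)) (fun t => ?_) ?_
  · rw [Real.norm_eq_abs, ← hsum t]
    exact (abs_sub_average_le_spread (v t) j).trans (hspread t)
  · simpa only [zero_mul] using (tendsto_pow_atTop_nhds_zero_of_lt_one hrate
      (by linarith [hpos p.1 p.2])).mul_const (spread (v 0))

end Matrix

end

/-- Two parallel average-consensus iterations with a strictly positive doubly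
stochastic matrix compute the inverse-variance weighted optimal estimator:
each node's ratio `aⱼ(t)/bⱼ(t)` converges to
`x̂ = (Σ xₗ/σₗ²)/(Σ 1/σₗ²)`. -/
theorem ratio_consensus_computes_optimal_estimator
    (N : ℕ) (hN : 1 ≤ N) (P : Matrix (Fin N) (Fin N) ℝ)
    (hpos : ∀ i j, 0 < P i j)
    (hrow : ∀ i, ∑ j, P i j = 1) (hcol : ∀ j, ∑ i, P i j = 1)
    (x σ : Fin N → ℝ) (hσ : ∀ i, 0 < σ i)
    (a b : ℕ → Fin N → ℝ)
    (ha0 : ∀ k, a 0 k = x k / (σ k) ^ 2) (hb0 : ∀ k, b 0 k = ((σ k) ^ 2)⁻¹)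
    (ha : ∀ t, a (t + 1) = P.mulVec (a t)) (hb : ∀ t, b (t + 1) = P.mulVec (b t)) :
    ∀ j : Fin N,
      Tendsto (fun t => a t j / b t j) atTop
        (nhds ((∑ i, x i / (σ i) ^ 2) / ∑ i, ((σ i) ^ 2)⁻¹)) := by
  intro j
  have : Nonempty (Fin N) := Fin.pos_iff_nonempty.mp hN
  have hP : P ∈ doublyStochastic ℝ (Fin N) :=
    mem_doublyStochastic_iff_sum.2 ⟨fun i j => (hpos i j).le, hrow, hcol⟩
  have hta := tendsto_average_of_doublyStochastic_of_pos hP hpos a ha j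
  have htb := tendsto_average_of_doublyStochastic_of_pos hP hpos b hb j
  simp only [ha0, hb0, Fintype.card_fin] at hta htb
  have hweights : 0 < ∑ i, ((σ i) ^ 2)⁻¹ :=
    sum_pos (fun i _ => inv_pos.2 (pow_pos (hσ i) 2)) univ_nonempty
  have hN0 : (0 : ℝ) < N := by exact_mod_cast hN
  simpa only [div_div_div_cancel_right₀ hN0.ne', Pi.div_def] using hta.div htb (by positivity)
end
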